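/- The following are equivalent for an infinite alphabet A: (i) A is countable; (ii) Σ_A is second countable; (iii) Σ_A is first countable. -/

import Mathlib

open Topology Filter Set

noncomputable section

/-- The set of finite and infinite sequences over the alphabet `A`, encoded as
functions `ℕ → Option A` which, once `none`, stay `none`. -/
def Sig (A : Type*) : Type _ :=
  {f : ℕ → Option A // ∀ n, f n = none → f (n + 1) = none}

namespace Sig

variable {A : Type*}

/-- The empty sequence `0⃗`. -/
def nil : Sig A := ⟨fun _ => none, fun _ _ => rfl⟩

/-- The length of a sequence, an extended natural number. -/
def len (x : Sig A) : ℕ∞ := sInf {n : ℕ∞ | ∃ k : ℕ, n = (k : ℕ∞) ∧ x.1 k = none}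

/-- The finite sequence determined by a list. -/
def ofList (w : List A) : Sig A :=
  ⟨fun n => w[n]?, fun n h => by
    rw [List.getElem?_eq_none_iff] at h ⊢
    omega⟩

/-- The shift map: delete the first entry. -/
def shift (x : Sig A) : Sig A := ⟨fun n => x.1 (n + 1), fun n h => x.2 _ h⟩

/-- The cylinder set `Z(w)` of all sequences beginning with the finite word `w`. -/
def cyl (w : List A) : Set (Sig A) := {z | ∀ i < w.length, z.1 i = w[i]?}

/-- The generalized cylinder set `Z(w, F)`. -/
def cylF (w : List A) (F : Set A) : Set (Sig A) := cyl w \ ⋃ a ∈ F, cyl (w ++ [a])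

/-- The space `X_A = A_∞^ℕ` where `A_∞` is the one-point compactification of the
discrete space `A`. -/
def XA (A : Type*) : Type _ := ℕ → OnePoint A

instance (A : Type*) : TopologicalSpace (XA A) :=
  letI : TopologicalSpace A := ⊥
  inferInstanceAs (TopologicalSpace (ℕ → OnePoint A))

/-- View a point of `A_∞` as an `Option A` (they are definitionally equal). -/
def toOpt (y : OnePoint A) : Option A := y

open Classical in
/-- The quotient map `Q : X_A → Σ_A`, cutting a sequence over `A_∞` at the first
occurrence of `∞`. -/
def Q (x : XA A) : Sig A :=
  ⟨fun n => if ∃ i ≤ n, x i = OnePoint.infty then none else toOpt (x n), by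
    intro n h
    dsimp only at h ⊢
    by_cases hex : ∃ i ≤ n, x i = OnePoint.infty
    · obtain ⟨i, hi, hxi⟩ := hex
      exact if_pos ⟨i, hi.trans (Nat.le_succ n), hxi⟩
    · rw [if_neg hex] at h
      have : x n = OnePoint.infty := h
      exact absurd ⟨n, le_refl n, this⟩ hex⟩

/-- The quotient topology on `Σ_A` induced by `Q`. -/
instance (A : Type*) : TopologicalSpace (Sig A) :=
  TopologicalSpace.coinduced Q inferInstance

/-- `w` occurs as a subblock of the sequence `x`. -/
def IsSubblock (w : List A) (x : Sig A) : Prop :=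
  ∃ k, ∀ i < w.length, x.1 (k + i) = w[i]?

/-- The set of blocks (finite subwords) of elements of `X`. -/
def blocks (X : Set (Sig A)) : Set (List A) := {w | ∃ x ∈ X, IsSubblock w x}

/-- A shift space: closed, shift invariant, with the infinite-extension property. -/
def IsShiftSpace (X : Set (Sig A)) : Prop :=
  IsClosed X ∧ (∀ x ∈ X, shift x ∈ X) ∧
    ∀ w : List A, ofList w ∈ X → {a : A | (X ∩ cyl (w ++ [a])).Nonempty}.Infinite

/-- A shift space is row-finite if every symbol can be followed by only finitely
many symbols. -/
def RowFinite (X : Set (Sig A)) : Prop := ∀ a : A, {b : A | [a, b] ∈ blocks X}.Finite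

/-- The set of infinite sequences avoiding all blocks from `F`. -/
def XFinf (F : Set (List A)) : Set (Sig A) :=
  {x | len x = ⊤ ∧ ∀ w ∈ F, ¬ IsSubblock w x}

/-- The set of finite sequences with infinitely many extensions into `X_F^inf`. -/
def XFfin (F : Set (List A)) : Set (Sig A) :=
  {x | ∃ w : List A, x = ofList w ∧
    {a : A | (XFinf F ∩ cyl (w ++ [a])).Nonempty}.Infinite}

/-- The shift space `X_F` determined by the forbidden blocks `F`. -/
def XF (F : Set (List A)) : Set (Sig A) := XFinf F ∪ XFfin F

end Sig
namespace Sig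
variable {A : Type*}

/-- Cast `Option A` to `OnePoint A` (definitionally equal). -/
def ofOpt (o : Option A) : OnePoint A := o

/-- The canonical preimage of a sequence under `Q`. -/
def lift (x : Sig A) : XA A := fun n => ofOpt (x.1 n)

@[simp] lemma ofOpt_none : (ofOpt none : OnePoint A) = OnePoint.infty := rfl
@[simp] lemma ofOpt_some (a : A) : ofOpt (some a) = (a : OnePoint A) := rfl
@[simp] lemma toOpt_ofOpt (o : Option A) : toOpt (ofOpt o) = o := rfl
@[simp] lemma ofOpt_eq_infty_iff (o : Option A) : ofOpt o = OnePoint.infty ↔ o = none := Iff.rfl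

open Classical in
lemma Q_apply (y : XA A) (n : ℕ) :
    (Q y).1 n = if ∃ i ≤ n, y i = OnePoint.infty then none else toOpt (y n) := rfl

lemma Q_apply_of_exists {y : XA A} {n : ℕ} (h : ∃ i ≤ n, y i = OnePoint.infty) :
    (Q y).1 n = none := by rw [Q_apply, if_pos h]

lemma Q_apply_of_not_exists {y : XA A} {n : ℕ} (h : ¬ ∃ i ≤ n, y i = OnePoint.infty) :
    (Q y).1 n = toOpt (y n) := by rw [Q_apply, if_neg h]

lemma none_mono (x : Sig A) {m n : ℕ} (h : x.1 m = none) (hmn : m ≤ n) : x.1 n = none := by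
  induction n with
  | zero => exact Nat.le_zero.mp hmn ▸ h
  | succ k ih =>
    rcases Nat.lt_or_ge m (k+1) with hk | hk
    · exact x.2 k (ih (by omega))
    · have : m = k + 1 := by omega
      exact this ▸ h

lemma Q_lift (x : Sig A) : Q (lift x) = x := by
  apply Subtype.ext
  funext n
  by_cases hex : ∃ i ≤ n, lift x i = OnePoint.infty
  · rw [Q_apply_of_exists hex]
    obtain ⟨i, hin, hi⟩ := hex
    exact (none_mono x ((ofOpt_eq_infty_iff _).mp hi) hin).symm
  · rw [Q_apply_of_not_exists hex]
    rfl

lemma isOpen_Sig_iff {U : Set (Sig A)} : IsOpen U ↔ IsOpen (Q ⁻¹' U) := isOpen_coinduced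

end Sig
namespace Sig
variable {A : Type*}

instance : CompactSpace (XA A) := by
  letI : TopologicalSpace A := ⊥
  exact inferInstanceAs (CompactSpace (ℕ → OnePoint A))

lemma isOpen_coord_eq (i : ℕ) (b : A) :
    IsOpen {y : XA A | y i = (b : OnePoint A)} := by
  letI : TopologicalSpace A := ⊥
  haveI : DiscreteTopology A := ⟨rfl⟩
  have h : IsOpen ({(b : OnePoint A)} : Set (OnePoint A)) := by
    rw [OnePoint.isOpen_iff_of_notMem]
    · exact isOpen_discrete _
    · simp [OnePoint.infty_ne_coe]
  exact h.preimage (continuous_apply (A := fun _ : ℕ => OnePoint A) i)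

lemma isClosed_coord_eq (i : ℕ) (b : A) :
    IsClosed {y : XA A | y i = (b : OnePoint A)} := by
  letI : TopologicalSpace A := ⊥
  haveI : DiscreteTopology A := ⟨rfl⟩
  have h : IsClosed ({(b : OnePoint A)} : Set (OnePoint A)) := isClosed_singleton
  exact h.preimage (continuous_apply (A := fun _ : ℕ => OnePoint A) i)

end Sig
namespace Sig
variable {A : Type*}

@[simp] lemma ofList_apply (w : List A) (n : ℕ) : (ofList w).1 n = w[n]? := rfl

lemma toOpt_eq_iff (y : OnePoint A) (o : Option A) : toOpt y = o ↔ y = ofOpt o := Iff.rfl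

lemma mem_cyl_Q_iff (y : XA A) (v : List A) :
    Q y ∈ cyl v ↔ ∀ i : ℕ, ∀ h : i < v.length, y i = (v[i] : OnePoint A) := by
  constructor
  · intro h i hi
    have h1 : (Q y).1 i = some v[i] := by
      rw [h i hi, List.getElem?_eq_getElem hi]
    by_cases hex : ∃ j ≤ i, y j = OnePoint.infty
    · rw [Q_apply_of_exists hex] at h1; exact absurd h1 (by simp)
    · rw [Q_apply_of_not_exists hex] at h1
      exact (toOpt_eq_iff _ _).mp h1
  · intro h i hi
    have hex : ¬ ∃ j ≤ i, y j = OnePoint.infty := by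
      rintro ⟨j, hji, hj⟩
      have := h j (lt_of_le_of_lt hji hi)
      rw [this] at hj
      exact OnePoint.coe_ne_infty _ hj
    rw [Q_apply_of_not_exists hex, h i hi, List.getElem?_eq_getElem hi]
    rfl

lemma preimage_cyl (v : List A) :
    Q ⁻¹' cyl v = ⋂ i : Fin v.length, {y : XA A | y i = (v[i.1] : OnePoint A)} := by
  ext y
  simp only [Set.mem_preimage, Set.mem_iInter, Set.mem_setOf_eq, mem_cyl_Q_iff]
  exact ⟨fun h i => h i.1 i.2, fun h i hi => h ⟨i, hi⟩⟩

lemma isOpen_preimage_cyl (v : List A) : IsOpen (Q ⁻¹' cyl v) := by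
  rw [preimage_cyl]
  exact isOpen_iInter_of_finite fun i => isOpen_coord_eq i.1 _

lemma isClosed_preimage_cyl (v : List A) : IsClosed (Q ⁻¹' cyl v) := by
  rw [preimage_cyl]
  exact isClosed_iInter fun i => isClosed_coord_eq i.1 _

lemma isOpen_cyl (v : List A) : IsOpen (cyl v) :=
  isOpen_Sig_iff.mpr (isOpen_preimage_cyl v)

lemma isOpen_compl_cyl (v : List A) : IsOpen (cyl v)ᶜ :=
  isOpen_Sig_iff.mpr (by rw [Set.preimage_compl]; exact (isClosed_preimage_cyl v).isOpen_compl)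

lemma isOpen_cylF (w : List A) (F : Set A) (hF : F.Finite) : IsOpen (cylF w F) := by
  rw [isOpen_Sig_iff]
  show IsOpen (Q ⁻¹' (cyl w \ ⋃ a ∈ F, cyl (w ++ [a])))
  rw [Set.preimage_diff, Set.preimage_iUnion₂]
  exact (isOpen_preimage_cyl w).sdiff (hF.isClosed_biUnion fun a _ => isClosed_preimage_cyl _)

lemma mem_cyl_ofList (v : List A) : ofList v ∈ cyl v := by
  intro i hi
  simp

lemma eq_ofList_of_mem_cyl {z : Sig A} {w : List A} (hz : z ∈ cyl w)
    (hnone : z.1 w.length = none) : z = ofList w := by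
  apply Subtype.ext
  funext n
  rcases Nat.lt_or_ge n w.length with hn | hn
  · rw [hz n hn]; rfl
  · rw [ofList_apply, List.getElem?_eq_none (by omega)]
    exact none_mono z hnone hn

end Sig
namespace Sig
variable {A : Type*}

lemma finite_bad {U : Set (Sig A)} (hU : IsOpen U) {w : List A} (hw : ofList w ∈ U) :
    {a : A | ¬ cyl (w ++ [a]) ⊆ U}.Finite := by
  by_contra hinf
  rw [← Set.not_infinite, not_not] at hinf
  set L := w.length with hL
  obtain e := Set.Infinite.natEmbedding _ hinf
  set a : ℕ → A := fun n => (e n : A) with ha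
  have hainj : Function.Injective a := fun m n h => by
    have := e.injective (Subtype.ext h); exact this
  have hbad : ∀ n, ¬ cyl (w ++ [a n]) ⊆ U := fun n => (e n).2
  have hz : ∀ n, ∃ z, z ∈ cyl (w ++ [a n]) ∧ z ∉ U := by
    intro n
    obtain ⟨z, h1, h2⟩ := Set.not_subset.mp (hbad n)
    exact ⟨z, h1, h2⟩
  choose z hzc hzU using hz
  set y : ℕ → XA A := fun n => lift (z n) with hy
  have hyW : ∀ n, y n ∈ (Q ⁻¹' U)ᶜ := by
    intro n
    simp only [Set.mem_compl_iff, Set.mem_preimage, hy]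
    rw [Q_lift]
    exact hzU n
  have hclosed : IsClosed ((Q ⁻¹' U)ᶜ) := (isOpen_Sig_iff.mp hU).isClosed_compl
  have hle : Filter.map y Filter.atTop ≤ 𝓟 ((Q ⁻¹' U)ᶜ) :=
    Filter.le_principal_iff.mpr (Filter.mem_map.mpr (Filter.Eventually.of_forall hyW))
  obtain ⟨ystar, hystar, hclus⟩ := hclosed.isCompact.exists_clusterPt hle
  -- coordinates below L
  have hcoordn : ∀ n i, (hi : i < L) → y n i = (w[i] : OnePoint A) := by
    intro n i hi
    have h1 : (z n).1 i = (w ++ [a n])[i]? := hzc n i (by simp; omega)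
    have h2 : (w ++ [a n])[i]? = some w[i] := by
      rw [List.getElem?_append_left hi, List.getElem?_eq_getElem hi]
    show ofOpt ((z n).1 i) = _
    rw [h1, h2]
    rfl
  have hcoord : ∀ i, (hi : i < L) → ystar i = (w[i] : OnePoint A) := by
    intro i hi
    have hCc : IsClosed {v : XA A | v i = (w[i] : OnePoint A)} := isClosed_coord_eq i _
    have hle2 : Filter.map y Filter.atTop ≤ 𝓟 {v : XA A | v i = (w[i] : OnePoint A)} :=
      Filter.le_principal_iff.mpr (Filter.mem_map.mpr
        (Filter.Eventually.of_forall fun n => hcoordn n i hi))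
    have : ystar ∈ closure {v : XA A | v i = (w[i] : OnePoint A)} :=
      mem_closure_iff_clusterPt.mpr (hclus.mono hle2)
    rwa [hCc.closure_eq] at this
  -- coordinate L
  have hcoordLn : ∀ n, y n L = (a n : OnePoint A) := by
    intro n
    have h1 : (z n).1 L = (w ++ [a n])[L]? := hzc n L (by simp; omega)
    have h2 : (w ++ [a n])[L]? = some (a n) := by
      rw [List.getElem?_concat_length]
    show ofOpt ((z n).1 L) = _
    rw [h1, h2]
    rfl
  have hinfty : ystar L = OnePoint.infty := by
    by_contra hne
    obtain ⟨b, hb⟩ := OnePoint.ne_infty_iff_exists.mp hne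
    have hO : IsOpen {v : XA A | v L = (b : OnePoint A)} := isOpen_coord_eq L b
    have hmemO : {v : XA A | v L = (b : OnePoint A)} ∈ 𝓝 ystar :=
      hO.mem_nhds (by simpa using hb.symm)
    have hfin : {n : ℕ | a n = b}.Finite :=
      (Set.finite_singleton b).preimage (hainj.injOn)
    have hev : {v : XA A | v L = (b : OnePoint A)}ᶜ ∈ Filter.map y Filter.atTop := by
      rw [Filter.mem_map]
      have : {n : ℕ | a n = b}ᶜ ∈ Filter.cofinite := hfin.compl_mem_cofinite
      rw [Nat.cofinite_eq_atTop] at this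
      apply Filter.mem_of_superset this
      intro n hn
      simp only [Set.mem_compl_iff, Set.mem_setOf_eq] at hn
      simp only [Set.mem_preimage, Set.mem_compl_iff, Set.mem_setOf_eq]
      rw [hcoordLn n]
      exact fun hc => hn (OnePoint.coe_eq_coe.mp hc)
    have : {v : XA A | v L = (b : OnePoint A)} ∩ {v : XA A | v L = (b : OnePoint A)}ᶜ ∈
        𝓝 ystar ⊓ Filter.map y Filter.atTop :=
      Filter.inter_mem (Filter.mem_inf_of_left hmemO) (Filter.mem_inf_of_right hev)
    obtain ⟨v, hv1, hv2⟩ := hclus.nonempty_of_mem this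
    exact hv2 hv1
  -- Q ystar = ofList w
  have hQ : Q ystar = ofList w := by
    apply Subtype.ext
    funext n
    rcases Nat.lt_or_ge n L with hn | hn
    · have hex : ¬ ∃ j ≤ n, ystar j = OnePoint.infty := by
        rintro ⟨j, hj, hj2⟩
        rw [hcoord j (by omega)] at hj2
        exact OnePoint.coe_ne_infty _ hj2
      rw [Q_apply_of_not_exists hex, ofList_apply, List.getElem?_eq_getElem hn]
      rw [toOpt_eq_iff, hcoord n hn]
      rfl
    · rw [Q_apply_of_exists ⟨L, hn, hinfty⟩, ofList_apply,
        List.getElem?_eq_none (by omega)]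
  exact hystar (by rw [Set.mem_preimage, hQ]; exact hw)
end Sig
namespace Sig
variable {A : Type*}

lemma second_of_countable [Countable A] : SecondCountableTopology (Sig A) := by
  classical
  have hbasis : TopologicalSpace.IsTopologicalBasis
      (Set.range (fun p : List A × Finset A => cylF p.1 ↑p.2)) := by
    apply TopologicalSpace.isTopologicalBasis_of_isOpen_of_nhds
    · rintro s ⟨⟨w, F⟩, rfl⟩
      exact isOpen_cylF w ↑F F.finite_toSet
    · intro x U hxU hU
      by_cases hfin : ∃ n, x.1 n = none
      · -- x is a finite sequence
        set L := Nat.find hfin with hLdef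
        have hne : ∀ i : ℕ, i < L → x.1 i ≠ none := fun i hi => Nat.find_min hfin hi
        set w : List A := List.ofFn
          (fun i : Fin L => (x.1 i).get (Option.ne_none_iff_isSome.mp (hne i i.2))) with hw
        have hlen : w.length = L := List.length_ofFn
        have hwi : ∀ i : ℕ, (hi : i < L) → w[i]? = x.1 i := by
          intro i hi
          rw [List.getElem?_eq_getElem (by omega), List.getElem_ofFn]
          simp
        have hx : x = ofList w := by
          apply Subtype.ext
          funext m
          rcases Nat.lt_or_ge m L with hm | hm
          · rw [ofList_apply, hwi m hm]
          · rw [ofList_apply, List.getElem?_eq_none (by omega)]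
            exact none_mono x (Nat.find_spec hfin) hm
        have hwU : ofList w ∈ U := hx ▸ hxU
        set F : Finset A := (finite_bad hU hwU).toFinset with hF
        refine ⟨cylF w ↑F, ⟨⟨w, F⟩, rfl⟩, ?_, ?_⟩
        · constructor
          · rw [hx]; exact mem_cyl_ofList w
          · intro hmem
            simp only [Set.mem_iUnion] at hmem
            obtain ⟨b, _, hb⟩ := hmem
            have := hb w.length (by simp)
            rw [List.getElem?_concat_length] at this
            rw [hlen] at this
            rw [Nat.find_spec hfin] at this
            exact Option.some_ne_none b this.symm
        · rintro zz ⟨hz1, hz2⟩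
          cases hzn : zz.1 w.length with
          | none => rw [eq_ofList_of_mem_cyl hz1 hzn]; exact hwU
          | some b =>
            have hcz : zz ∈ cyl (w ++ [b]) := by
              intro i hi
              simp only [List.length_append, List.length_cons, List.length_nil] at hi
              rcases Nat.lt_or_ge i w.length with him | him
              · rw [List.getElem?_append_left him]; exact hz1 i him
              · have : i = w.length := by omega
                subst this
                rw [List.getElem?_concat_length]; exact hzn
            have hbF : b ∉ F := by
              intro hmem
              exact hz2 (Set.mem_biUnion (by exact_mod_cast hmem) hcz)
            have : ¬ ¬ cyl (w ++ [b]) ⊆ U := by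
              intro hc
              exact hbF ((Set.Finite.mem_toFinset _).mpr hc)
            exact not_not.mp this hcz
      · -- x is an infinite sequence
        push_neg at hfin
        letI : TopologicalSpace A := ⊥
        have hmem : lift x ∈ Q ⁻¹' U := by rw [Set.mem_preimage, Q_lift]; exact hxU
        have hW2 : @IsOpen (ℕ → OnePoint A) _ (Q ⁻¹' U) := isOpen_Sig_iff.mp hU
        obtain ⟨I, u, hu, hsub⟩ := (isOpen_pi_iff.mp hW2) (lift x) hmem
        set N := I.sup id + 1 with hN
        have hIN : ∀ i ∈ I, i < N := fun i hi => Nat.lt_succ_of_le (Finset.le_sup (f := id) hi)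
        set w : List A := List.ofFn
          (fun i : Fin N => (x.1 i).get (Option.ne_none_iff_isSome.mp (hfin i))) with hw
        have hlen : w.length = N := List.length_ofFn
        have hwi : ∀ i : ℕ, (hi : i < N) → w[i]? = x.1 i := by
          intro i hi
          rw [List.getElem?_eq_getElem (by omega), List.getElem_ofFn]
          simp
        refine ⟨cylF w ↑(∅ : Finset A), ⟨⟨w, ∅⟩, rfl⟩, ?_, ?_⟩
        · constructor
          · intro i hi
            rw [hwi i (by omega)]
          · simp [cyl]
        · rintro zz ⟨hz1, _⟩
          have hzmem : lift zz ∈ (↑I : Set ℕ).pi u := by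
            intro i hi
            have hiN : i < N := hIN i hi
            have : zz.1 i = x.1 i := by rw [hz1 i (by omega), hwi i hiN]
            show ofOpt (zz.1 i) ∈ u i
            rw [this]
            exact (hu i hi).2
          have : lift zz ∈ Q ⁻¹' U := hsub hzmem
          rw [Set.mem_preimage, Q_lift] at this
          exact this
  exact hbasis.secondCountableTopology (Set.countable_range _)

end Sig
namespace Sig
variable {A : Type*}

lemma nil_eq_ofList : (nil : Sig A) = ofList [] := by
  apply Subtype.ext
  funext n
  show (none : Option A) = ([] : List A)[n]?
  simp

lemma countable_of_first (h : FirstCountableTopology (Sig A)) : Countable A := by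
  haveI := h
  obtain ⟨uu, huu⟩ := (𝓝 (nil : Sig A)).exists_antitone_basis
  have hV : ∀ n : ℕ, ∃ V : Set (Sig A), IsOpen V ∧ nil ∈ V ∧ V ⊆ uu n := by
    intro n
    have hmem : uu n ∈ 𝓝 (nil : Sig A) := huu.toHasBasis.mem_of_mem trivial
    rcases mem_nhds_iff.mp hmem with ⟨V, hVu, hVo, hVn⟩
    exact ⟨V, hVo, hVn, hVu⟩
  choose V hVo hVn hVu using hV
  have hfin : ∀ n, {a : A | ¬ cyl ([] ++ [a]) ⊆ V n}.Finite := fun n =>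
    finite_bad (hVo n) (nil_eq_ofList ▸ hVn n)
  have hcover : (Set.univ : Set A) ⊆ ⋃ n, {a : A | ¬ cyl ([] ++ [a]) ⊆ V n} := by
    intro b _
    have hopen : IsOpen (cyl [b])ᶜ := isOpen_compl_cyl [b]
    have hmem : (cyl [b])ᶜ ∈ 𝓝 (nil : Sig A) := hopen.mem_nhds (by
      intro hc
      have h0 : (nil : Sig A).1 0 = [b][0]? := hc 0 (by simp)
      exact Option.some_ne_none b (h0 : (none : Option A) = some b).symm)
    obtain ⟨n, hn⟩ := huu.toHasBasis.mem_iff.mp hmem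
    refine Set.mem_iUnion.mpr ⟨n, ?_⟩
    intro hsub
    have h1 : ofList ([] ++ [b]) ∈ V n := hsub (mem_cyl_ofList ([] ++ [b]))
    have h2 : ofList ([] ++ [b]) ∈ (cyl [b])ᶜ := hn.2 (hVu n h1)
    exact h2 (mem_cyl_ofList [b])
  have hcu : (Set.univ : Set A).Countable :=
    Set.Countable.mono hcover (Set.countable_iUnion fun n => (hfin n).countable)
  exact Set.countable_univ_iff.mp hcu

end Sig

/-- for an infinite alphabet `A`: `A` countable ↔ `Σ_A` second countable
↔ `Σ_A` first countable. -/
theorem stmt6 (A : Type*) [Infinite A] :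
    (Countable A ↔ SecondCountableTopology (Sig A)) ∧
      (Countable A ↔ FirstCountableTopology (Sig A)) := by
  refine ⟨⟨fun h => @Sig.second_of_countable A h, fun h => ?_⟩,
    ⟨fun h => ?_, fun h => Sig.countable_of_first h⟩⟩
  · haveI := h
    exact Sig.countable_of_first inferInstance
  · haveI := @Sig.second_of_countable A h
    exact inferInstance
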